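/- arXiv:1907.03836 — 7 statements merged into one kernel-verified Lean document; each statement's English description precedes it below -/
import Mathlib

section
/- Let L be a reflective subfibration on E and let f : X ⟶ Y be a morphism of E. If α is an L_X-equivalence in Over X, then Σ_f(α) := (Over.map f)(α), the image of α under postcomposition with f, is an L_Y-equivalence in Over Y. -/
open CategoryTheory CategoryTheory.Limits

universe v u

/-- A morphism `l` is uniquely left orthogonal to a morphism `r`. -/
def UniqueLift {C : Type*} [Category C] {A B X Y : C} (l : A ⟶ B) (r : X ⟶ Y) : Prop :=
  ∀ (u : A ⟶ X) (v : B ⟶ Y), u ≫ r = l ≫ v → ∃! d : B ⟶ X, l ≫ d = u ∧ d ≫ r = v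

variable (E : Type u) [Category.{v} E] [HasPullbacks E]

/-- A reflective subfibration on a category `E` with pullbacks: a pullback-stable
assignment of a reflective (full) subcategory `D X ⊆ Over X` for every `X : E`,
with reflector `Lf X` (the composite of the localization onto `D X` and the
inclusion) and unit `η X`, such that pullback functors preserve the subcategories
and the canonical comparison map `L_X (f* p) ⟶ f* (L_Y p)` is an isomorphism;
the latter is expressed by requiring that the pullback of a unit map is an
`L_X`-equivalence, which is equivalent to invertibility of the comparison map. -/
structure ReflectiveSubfibration where
  /-- membership in the reflective subcategory `D X ⊆ Over X` -/
  loc : ∀ {X : E}, Over X → Prop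
  /-- the localization functor `L_X : Over X ⥤ Over X` -/
  Lf : ∀ X : E, Over X ⥤ Over X
  /-- the unit of the localization -/
  η : ∀ X : E, 𝟭 (Over X) ⟶ Lf X
  loc_obj : ∀ (X : E) (p : Over X), loc ((Lf X).obj p)
  reflect : ∀ (X : E) (p d : Over X), loc d → ∀ g : p ⟶ d,
      ∃! h : (Lf X).obj p ⟶ d, (η X).app p ≫ h = g
  loc_pullback : ∀ {X Y : E} (f : X ⟶ Y) (p : Over Y),
      loc p → loc ((Over.pullback f).obj p)
  comparison_isIso : ∀ {X Y : E} (f : X ⟶ Y) (p : Over Y),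
      IsIso ((Lf X).map ((Over.pullback f).map ((η Y).app p)))

variable {E}

namespace ReflectiveSubfibration

variable (rsf : ReflectiveSubfibration E)

/-- A morphism `p : A ⟶ X` of `E` is `L`-local if it lies in `D X` as an object of `Over X`. -/
def LocalMap {A X : E} (p : A ⟶ X) : Prop := rsf.loc (Over.mk p)

/-- A morphism of `Over X` is an `L_X`-equivalence if `L_X` inverts it. -/
def Lequiv {X : E} {p q : Over X} (α : p ⟶ q) : Prop := IsIso ((rsf.Lf X).map α)

/-- A morphism `f : A ⟶ X` is `L`-connected if `L_X f` is a terminal object of `Over X`,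
i.e. its structure morphism to `X` is an isomorphism. -/
def Connected {A X : E} (f : A ⟶ X) : Prop := IsIso ((rsf.Lf X).obj (Over.mk f)).hom

/-- A morphism is `L`-separated if its diagonal is `L`-local. -/
def Separated {A X : E} (p : A ⟶ X) : Prop := rsf.LocalMap (pullback.diagonal p)

end ReflectiveSubfibration

/-- Precomposition with an `L_X`-equivalence is bijective on maps into local objects. -/
lemma precomp_bij (rsf : ReflectiveSubfibration E) {X : E} {p q : Over X} (α : p ⟶ q)
    (hα : rsf.Lequiv α) (e : Over X) (he : rsf.loc e) (g : p ⟶ e) :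
    ∃! h : q ⟶ e, α ≫ h = g := by
  have I : IsIso ((rsf.Lf X).map α) := hα
  obtain ⟨gg, hgg, uniqg⟩ := rsf.reflect X p e he g
  have nat : α ≫ (rsf.η X).app q = (rsf.η X).app p ≫ (rsf.Lf X).map α := by
    simpa using ((rsf.η X).naturality α)
  refine ⟨(rsf.η X).app q ≫ inv ((rsf.Lf X).map α) ≫ gg, ?_, ?_⟩
  · dsimp only
    simp only [← Category.assoc]
    rw [nat]
    simp [hgg]
  · intro h' hh'
    obtain ⟨hh, hhh, _⟩ := rsf.reflect X q e he h'
    have : (rsf.η X).app p ≫ ((rsf.Lf X).map α ≫ hh) = g := by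
      rw [← Category.assoc, ← nat, Category.assoc, hhh, hh']
    have e1 : (rsf.Lf X).map α ≫ hh = gg := uniqg _ this
    have : hh = inv ((rsf.Lf X).map α) ≫ gg := by
      rw [← e1, IsIso.inv_hom_id_assoc]
    rw [← hhh, this]

/-- Precomposition with `Σ_f α` is bijective on maps into local objects, for `α`
an `L_X`-equivalence. -/
lemma precomp_map_bij (rsf : ReflectiveSubfibration E) {X Y : E} (f : X ⟶ Y)
    {p q : Over X} (α : p ⟶ q) (hα : rsf.Lequiv α) (d : Over Y) (hd : rsf.loc d)
    (g : (Over.map f).obj p ⟶ d) :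
    ∃! h : (Over.map f).obj q ⟶ d, (Over.map f).map α ≫ h = g := by
  let adj := Over.mapPullbackAdj f
  obtain ⟨h', hh', uniqh'⟩ := precomp_bij rsf α hα ((Over.pullback f).obj d)
    (rsf.loc_pullback f d hd) (adj.homEquiv p d g)
  refine ⟨(adj.homEquiv q d).symm h', ?_, ?_⟩
  · apply (adj.homEquiv p d).injective
    rw [Adjunction.homEquiv_naturality_left]
    simp [hh']
  · intro y hy
    apply (adj.homEquiv q d).injective
    simp only [Equiv.apply_symm_apply]
    apply uniqh'
    rw [← Adjunction.homEquiv_naturality_left, hy]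

/-- If `α` is an `L_X`-equivalence in `Over X` and `f : X ⟶ Y`, then `Σ_f α`, the image
of `α` under postcomposition with `f`, is an `L_Y`-equivalence in `Over Y`. -/
theorem lequiv_map (rsf : ReflectiveSubfibration E) {X Y : E} (f : X ⟶ Y)
    {p q : Over X} (α : p ⟶ q) (hα : rsf.Lequiv α) :
    rsf.Lequiv ((Over.map f).map α) := by
  set p' := (Over.map f).obj p
  set q' := (Over.map f).obj q
  set α' : p' ⟶ q' := (Over.map f).map α
  set ηp := (rsf.η Y).app p'
  set ηq := (rsf.η Y).app q'
  have nat : α' ≫ ηq = ηp ≫ (rsf.Lf Y).map α' := by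
    simpa [ηp, ηq] using ((rsf.η Y).naturality α')
  -- lift `ηp` through `α'` into the local object `L p'`
  obtain ⟨s, hs, -⟩ := precomp_map_bij rsf f α hα ((rsf.Lf Y).obj p')
    (rsf.loc_obj Y p') ηp
  -- extend `s` over the unit
  obtain ⟨s', hs', -⟩ := rsf.reflect Y q' ((rsf.Lf Y).obj p') (rsf.loc_obj Y p') s
  refine ⟨s', ?_, ?_⟩
  · -- L α' ≫ s' = 𝟙
    obtain ⟨w, -, uniqw⟩ := rsf.reflect Y p' ((rsf.Lf Y).obj p') (rsf.loc_obj Y p') ηp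
    have h1 : ηp ≫ ((rsf.Lf Y).map α' ≫ s') = ηp := by
      rw [← Category.assoc, ← nat, Category.assoc, hs', hs]
    have h2 : ηp ≫ 𝟙 _ = ηp := Category.comp_id _
    rw [uniqw _ h1, ← uniqw _ h2]
  · -- s' ≫ L α' = 𝟙
    -- first: s ≫ L α' = ηq, by cancelling α' (precomposition into local `L q'` is injective)
    obtain ⟨t, -, uniqt⟩ := precomp_map_bij rsf f α hα ((rsf.Lf Y).obj q')
      (rsf.loc_obj Y q') (α' ≫ ηq)
    have e1 : α' ≫ (s ≫ (rsf.Lf Y).map α') = α' ≫ ηq := by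
      rw [← Category.assoc, hs, nat]
    have e2 : α' ≫ ηq = α' ≫ ηq := rfl
    have key : s ≫ (rsf.Lf Y).map α' = ηq := by
      rw [uniqt _ e1, ← uniqt _ e2]
    obtain ⟨w, -, uniqw⟩ := rsf.reflect Y q' ((rsf.Lf Y).obj q') (rsf.loc_obj Y q') ηq
    have h1 : ηq ≫ (s' ≫ (rsf.Lf Y).map α') = ηq := by
      rw [← Category.assoc, hs', key]
    have h2 : ηq ≫ 𝟙 _ = ηq := Category.comp_id _
    rw [uniqw _ h1, ← uniqw _ h2]
end

section
/- Let L be a reflective subfibration on E and X an object of E such that the slice category Over X is cartesian closed. Then L_X preserves binary products: for all objects p, q of Over X, the canonical morphism L_X(p ⨯ q) ⟶ L_X(p) ⨯ L_X(q) is an isomorphism; consequently, if α and β are L_X-equivalences, then so is α ⨯ β. -/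
/-!
In `Over X` the functor `- ⨯ q` is `Σ_q ∘ q^*`. An `L`-equivalence is a map along which every map
into a local object extends uniquely; `q^*` preserves `L`-equivalences by the pullback stability of
the reflectors, and `Σ_q` preserves them because its right adjoint `q^*` preserves local objects.
So products of `L`-equivalences are `L`-equivalences. Applied to the units `p ⟶ L p` and
`q ⟶ L q`, this makes the comparison `L (p ⨯ q) ⟶ L p ⨯ L q` an `L`-equivalence between objects
at which the unit is invertible, hence an isomorphism.
-/

open CategoryTheory CategoryTheory.Limits

universe v u

variable (E : Type u) [Category.{v} E] [HasPullbacks E]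

variable {E}

namespace CategoryTheory.Over

variable {X : E}

lemma pullback_map_left_fst {Y : E} (f : X ⟶ Y) {a b : Over Y} (α : a ⟶ b) :
    ((Over.pullback f).map α).left ≫ pullback.fst b.hom f = pullback.fst a.hom f ≫ α.left :=
  pullback.lift_fst _ _ _

lemma pullback_map_left_snd {Y : E} (f : X ⟶ Y) {a b : Over Y} (α : a ⟶ b) :
    ((Over.pullback f).map α).left ≫ pullback.snd b.hom f = pullback.snd a.hom f :=
  pullback.lift_snd _ _ _

noncomputable def prodIsoMapPullback (a q : Over X) [HasBinaryProduct a q] :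
    a ⨯ q ≅ (Over.map q.hom).obj ((Over.pullback q.hom).obj a) :=
  Over.isoMk (prodLeftIsoPullback a q) ((prodLeftIsoPullback_hom_snd_assoc a q _).trans (Over.w _))

lemma prodIsoMapPullback_hom_left (a q : Over X) [HasBinaryProduct a q] :
    (prodIsoMapPullback a q).hom.left = (prodLeftIsoPullback a q).hom :=
  rfl

lemma prod_map_id_eq [HasBinaryProducts (Over X)] {a b : Over X} (α : a ⟶ b) (q : Over X) :
    prod.map α (𝟙 q) = (prodIsoMapPullback a q).hom ≫
      (Over.map q.hom).map ((Over.pullback q.hom).map α) ≫ (prodIsoMapPullback b q).inv := by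
  rw [← Category.assoc, Iso.eq_comp_inv]
  ext
  simp only [comp_left, prodIsoMapPullback_hom_left, map_map_left]
  apply pullback.hom_ext
  · simp only [Category.assoc, pullback_map_left_fst, prodLeftIsoPullback_hom_fst_assoc,
      prodLeftIsoPullback_hom_fst, ← comp_left, prod.map_fst]
  · simp only [Category.assoc, pullback_map_left_snd, prodLeftIsoPullback_hom_snd, ← comp_left,
      prod.map_snd, Category.comp_id]

end CategoryTheory.Over

namespace ReflectiveSubfibration

variable (rsf : ReflectiveSubfibration E) {X : E}

lemma lequiv_of_isIso {a b : Over X} (α : a ⟶ b) [IsIso α] : rsf.Lequiv α :=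
  inferInstanceAs (IsIso ((rsf.Lf X).map α))

lemma lequiv_comp {a b c : Over X} {α : a ⟶ b} {β : b ⟶ c} (hα : rsf.Lequiv α)
    (hβ : rsf.Lequiv β) : rsf.Lequiv (α ≫ β) := by
  have : IsIso ((rsf.Lf X).map α) := hα
  have : IsIso ((rsf.Lf X).map β) := hβ
  rw [Lequiv, Functor.map_comp]
  infer_instance

lemma lequiv_of_precomp {a b c : Over X} {α : a ⟶ b} {β : b ⟶ c} (hα : rsf.Lequiv α)
    (hαβ : rsf.Lequiv (α ≫ β)) : rsf.Lequiv β := by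
  have : IsIso ((rsf.Lf X).map α) := hα
  have : IsIso ((rsf.Lf X).map (α ≫ β)) := hαβ
  rw [Functor.map_comp] at this
  exact IsIso.of_isIso_comp_left ((rsf.Lf X).map α) _

lemma lequiv_of_postcomp {a b c : Over X} {α : a ⟶ b} {β : b ⟶ c} (hβ : rsf.Lequiv β)
    (hαβ : rsf.Lequiv (α ≫ β)) : rsf.Lequiv α := by
  have : IsIso ((rsf.Lf X).map β) := hβ
  have : IsIso ((rsf.Lf X).map (α ≫ β)) := hαβ
  rw [Functor.map_comp] at this
  exact IsIso.of_isIso_comp_right _ ((rsf.Lf X).map β)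

lemma bijective_precomp_unit {p d : Over X} (hd : rsf.loc d) :
    Function.Bijective fun h : (rsf.Lf X).obj p ⟶ d ↦ (rsf.η X).app p ≫ h :=
  (Function.bijective_iff_existsUnique _).mpr (rsf.reflect X p d hd)

lemma isIso_unit_app_of_retraction {d : Over X} {r : (rsf.Lf X).obj d ⟶ d}
    (hr : (rsf.η X).app d ≫ r = 𝟙 d) : IsIso ((rsf.η X).app d) :=
  ⟨r, hr, (rsf.bijective_precomp_unit (rsf.loc_obj X d)).1 (by simp [reassoc_of% hr])⟩

lemma isIso_unit_app_of_loc {d : Over X} (hd : rsf.loc d) : IsIso ((rsf.η X).app d) :=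
  have ⟨_, hr⟩ := (rsf.bijective_precomp_unit hd).2 (𝟙 d)
  rsf.isIso_unit_app_of_retraction hr

lemma isIso_unit_app_prod {a b : Over X} [HasBinaryProduct a b] [IsIso ((rsf.η X).app a)]
    [IsIso ((rsf.η X).app b)] : IsIso ((rsf.η X).app (a ⨯ b)) :=
  rsf.isIso_unit_app_of_retraction (r := prod.lift
    ((rsf.Lf X).map prod.fst ≫ inv ((rsf.η X).app a))
    ((rsf.Lf X).map prod.snd ≫ inv ((rsf.η X).app b))) (by
      apply prod.hom_ext <;> simp [← NatTrans.naturality_assoc])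

lemma lequiv_unit_app (p : Over X) : rsf.Lequiv ((rsf.η X).app p) := by
  have : (rsf.Lf X).map ((rsf.η X).app p) = (rsf.η X).app ((rsf.Lf X).obj p) :=
    (rsf.bijective_precomp_unit (rsf.loc_obj X _)).1
      (by simpa using ((rsf.η X).naturality ((rsf.η X).app p)).symm)
  rw [Lequiv, this]
  exact rsf.isIso_unit_app_of_loc (rsf.loc_obj X p)

lemma isIso_of_lequiv {a b : Over X} {α : a ⟶ b} (hα : rsf.Lequiv α) [IsIso ((rsf.η X).app a)]
    [IsIso ((rsf.η X).app b)] : IsIso α := by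
  have : IsIso ((rsf.Lf X).map α) := hα
  have : IsIso (α ≫ (rsf.η X).app b) := by
    rw [← Functor.id_map α, (rsf.η X).naturality α]
    infer_instance
  exact IsIso.of_isIso_comp_right α ((rsf.η X).app b)

lemma lequiv_iff_bijective_precomp_map {a b : Over X} (α : a ⟶ b) :
    rsf.Lequiv α ↔
      ∀ d, rsf.loc d → Function.Bijective fun h : (rsf.Lf X).obj b ⟶ d ↦ (rsf.Lf X).map α ≫ h := by
  refine ⟨fun hα d _ ↦ ?_, fun H ↦ ?_⟩
  · have : IsIso ((rsf.Lf X).map α) := hα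
    exact (asIso ((rsf.Lf X).map α)).symm.homFromEquiv.bijective
  · obtain ⟨t, ht⟩ := (H _ (rsf.loc_obj X a)).2 (𝟙 _)
    refine ⟨t, ht, (H _ (rsf.loc_obj X b)).1 ?_⟩
    simp only [reassoc_of% ht, Category.comp_id]

lemma lequiv_iff_bijective_precomp {a b : Over X} (α : a ⟶ b) :
    rsf.Lequiv α ↔ ∀ d, rsf.loc d → Function.Bijective fun g : b ⟶ d ↦ α ≫ g := by
  rw [lequiv_iff_bijective_precomp_map]
  refine forall₂_congr fun d hd ↦ ?_
  have square : ((fun g : b ⟶ d ↦ α ≫ g) ∘ fun h ↦ (rsf.η X).app b ≫ h) =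
      (fun h ↦ (rsf.η X).app a ≫ h) ∘ fun h ↦ (rsf.Lf X).map α ≫ h := by
    funext h
    simpa using (rsf.η X).naturality_assoc α h
  rw [← (rsf.bijective_precomp_unit (p := a) hd).of_comp_iff', ← square,
    Function.Bijective.of_comp_iff _ (rsf.bijective_precomp_unit hd)]

lemma lequiv_map_of_adjunction {Y : E} {F : Over Y ⥤ Over X} {G : Over X ⥤ Over Y}
    (adj : F ⊣ G) (hG : ∀ d, rsf.loc d → rsf.loc (G.obj d)) {a b : Over Y} {α : a ⟶ b}
    (hα : rsf.Lequiv α) : rsf.Lequiv (F.map α) := by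
  rw [lequiv_iff_bijective_precomp] at hα ⊢
  intro d hd
  have : (fun g : F.obj b ⟶ d ↦ F.map α ≫ g) =
      (adj.homEquiv a d).symm ∘ (fun g ↦ α ≫ g) ∘ adj.homEquiv b d := by
    funext g
    simp [Adjunction.homEquiv_naturality_left_symm]
  rw [this]
  exact (adj.homEquiv a d).symm.bijective.comp ((hα _ (hG d hd)).comp (adj.homEquiv b d).bijective)

lemma lequiv_pullback_map {Y : E} (f : X ⟶ Y) {a b : Over Y} {α : a ⟶ b}
    (hα : rsf.Lequiv α) : rsf.Lequiv ((Over.pullback f).map α) := by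
  have : IsIso ((rsf.Lf Y).map α) := hα
  have square := congr_arg (Over.pullback f).map ((rsf.η Y).naturality α)
  rw [Functor.id_map, Functor.map_comp, Functor.map_comp] at square
  refine rsf.lequiv_of_postcomp (rsf.comparison_isIso f b) ?_
  rw [square]
  exact rsf.lequiv_comp (rsf.comparison_isIso f a) (rsf.lequiv_of_isIso _)

variable [HasBinaryProducts (Over X)]

lemma lequiv_prod_map_id {a b : Over X} {α : a ⟶ b} (hα : rsf.Lequiv α) (q : Over X) :
    rsf.Lequiv (prod.map α (𝟙 q)) := by
  have hmap := rsf.lequiv_map_of_adjunction (Over.mapPullbackAdj q.hom) (rsf.loc_pullback q.hom)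
    (rsf.lequiv_pullback_map q.hom hα)
  rw [Over.prod_map_id_eq]
  exact rsf.lequiv_comp (rsf.lequiv_of_isIso _) (rsf.lequiv_comp hmap (rsf.lequiv_of_isIso _))

lemma lequiv_prod_map {p p' q q' : Over X} {α : p ⟶ p'} {β : q ⟶ q'} (hα : rsf.Lequiv α)
    (hβ : rsf.Lequiv β) : rsf.Lequiv (prod.map α β) := by
  have hβ' : rsf.Lequiv (prod.map (𝟙 p') β) := by
    have : prod.map (𝟙 p') β =
        (prod.braiding p' q).hom ≫ prod.map β (𝟙 p') ≫ (prod.braiding p' q').inv := by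
      rw [← braid_natural_assoc, Iso.hom_inv_id, Category.comp_id]
    rw [this]
    exact rsf.lequiv_comp (rsf.lequiv_of_isIso _)
      (rsf.lequiv_comp (rsf.lequiv_prod_map_id hβ p') (rsf.lequiv_of_isIso _))
  have := rsf.lequiv_comp (rsf.lequiv_prod_map_id hα q) hβ'
  rwa [prod.map_map, Category.comp_id, Category.id_comp] at this

end ReflectiveSubfibration

theorem lf_preserves_prod_general (rsf : ReflectiveSubfibration E) (X : E)
    [CartesianMonoidalCategory (Over X)] :
    (∀ p q : Over X, IsIso (Limits.prodComparison (rsf.Lf X) p q)) ∧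
    (∀ {p p' q q' : Over X} (α : p ⟶ p') (β : q ⟶ q'),
      rsf.Lequiv α → rsf.Lequiv β → rsf.Lequiv (Limits.prod.map α β)) := by
  refine ⟨fun p q ↦ ?_, fun _ _ hα hβ ↦ rsf.lequiv_prod_map hα hβ⟩
  have hunit : (rsf.η X).app (p ⨯ q) ≫ prodComparison (rsf.Lf X) p q =
      prod.map ((rsf.η X).app p) ((rsf.η X).app q) := by
    apply prod.hom_ext <;> simpa using ((rsf.η X).naturality _).symm
  have := rsf.isIso_unit_app_of_loc (rsf.loc_obj X (p ⨯ q))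
  have := rsf.isIso_unit_app_of_loc (rsf.loc_obj X p)
  have := rsf.isIso_unit_app_of_loc (rsf.loc_obj X q)
  have := rsf.isIso_unit_app_prod (a := (rsf.Lf X).obj p) (b := (rsf.Lf X).obj q)
  refine rsf.isIso_of_lequiv (rsf.lequiv_of_precomp (rsf.lequiv_unit_app (p ⨯ q)) ?_)
  rw [hunit]
  exact rsf.lequiv_prod_map (rsf.lequiv_unit_app p) (rsf.lequiv_unit_app q)

/-- If `Over X` is cartesian closed, `L_X` preserves binary products: the canonical map
`L_X (p ⨯ q) ⟶ L_X p ⨯ L_X q` is an isomorphism; consequently a binary product of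
`L_X`-equivalences is an `L_X`-equivalence. -/
theorem lf_preserves_prod (rsf : ReflectiveSubfibration E) (X : E)
    [CartesianMonoidalCategory (Over X)] [MonoidalClosed (Over X)] :
    (∀ p q : Over X, IsIso (Limits.prodComparison (rsf.Lf X) p q)) ∧
    (∀ {p p' q q' : Over X} (α : p ⟶ p') (β : q ⟶ q'),
      rsf.Lequiv α → rsf.Lequiv β → rsf.Lequiv (Limits.prod.map α β)) :=
  lf_preserves_prod_general rsf X
end

section
/- Let L be a reflective subfibration on E and X an object of E such that the slice category Over X is cartesian closed. A morphism α : p ⟶ q in Over X is an L_X-equivalence if and only if for every object r of D_X the induced morphism on exponentials r^α : r^q ⟶ r^p is an isomorphism in Over X. -/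
open CategoryTheory CategoryTheory.Limits

universe v u

variable (E : Type u) [Category.{v} E] [HasPullbacks E]

variable {E}

/-!
By the universal property of the reflector, `α` is an `L_X`-equivalence iff precomposition with
`α` is bijective on maps into every local `r`. Maps `s ⟶ r^q` correspond to maps `q × s ⟶ r`,
so `r^α` is invertible iff every `α × s` is inverted by `Hom(-, r)`. Up to isomorphism,
`α × s` is `Σ_s s^* α`, and `L_X`-equivalences are stable under pullback (the comparison map
is invertible) and under `Σ_s` (its right adjoint `s^*` preserves local objects); conversely
`α × 1 ≅ α`.
-/

open MonoidalCategory MonoidalClosed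

lemma isIso_of_coyoneda_map_bijective_of_mem {C : Type*} [Category C] (P : ObjectProperty C)
    {A B : C} (f : A ⟶ B) (hA : P A) (hB : P B)
    (h : ∀ T, P T → Function.Bijective (fun g : B ⟶ T => f ≫ g)) :
    IsIso f := by
  obtain ⟨g, hg : f ≫ g = 𝟙 A⟩ := (h A hA).2 (𝟙 A)
  exact ⟨g, hg, (h B hB).1 (by simp [reassoc_of% hg])⟩

lemma isIso_pre_app_iff {C : Type*} [Category C] [MonoidalCategory C] [MonoidalClosed C]
    {p q : C} (α : p ⟶ q) (r : C) :
    IsIso ((pre α).app r) ↔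
      ∀ s, Function.Bijective (fun u : q ⊗ s ⟶ r => α ▷ s ≫ u) := by
  refine (isIso_iff_yoneda_map_bijective _).trans (forall_congr' fun s => ?_)
  let e := fun c : C => (ihom.adjunction c).homEquiv s r
  have conj : (fun g => g ≫ (pre α).app r) ∘ e q = e p ∘ (fun u => α ▷ s ≫ u) := by
    funext u
    exact curry_pre_app α u
  rw [← Equiv.bijective_comp (e q), conj, Equiv.comp_bijective]

namespace CategoryTheory.Over

variable {C : Type*} [Category C] {X : C} [CartesianMonoidalCategory (Over X)]

open CartesianMonoidalCategory Limits

lemma isPullback_tensor (c s : Over X) :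
    IsPullback (fst c s).left (snd c s).left c.hom s.hom :=
  Over.isPullback_of_binaryFan_isLimit _ (tensorProductIsBinaryProduct c s)

variable [HasPullbacks C]

noncomputable def tensorIsoMapPullback (c s : Over X) :
    c ⊗ s ≅ (Over.map s.hom).obj ((Over.pullback s.hom).obj c) :=
  Over.isoMk (isPullback_tensor c s).isoPullback
    (by dsimp; rw [IsPullback.isoPullback_hom_snd_assoc, Over.w])

lemma whiskerRight_eq_map_pullback {a b : Over X} (β : a ⟶ b) (s : Over X) :
    β ▷ s = (tensorIsoMapPullback a s).hom ≫
      (Over.map s.hom).map ((Over.pullback s.hom).map β) ≫ (tensorIsoMapPullback b s).inv := by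
  rw [← Category.assoc, Iso.eq_comp_inv]
  ext
  apply pullback.hom_ext <;>
    simp only [Over.comp_left, Category.assoc, tensorIsoMapPullback, Over.isoMk_hom_left,
      Over.map_map_left, Over.pullback_map_left, pullback.lift_fst, pullback.lift_snd,
      IsPullback.isoPullback_hom_fst, IsPullback.isoPullback_hom_snd,
      IsPullback.isoPullback_hom_fst_assoc] <;>
    simp only [← Over.comp_left, whiskerRight_fst, whiskerRight_snd]

end CategoryTheory.Over

namespace ReflectiveSubfibration

variable (rsf : ReflectiveSubfibration E)

noncomputable def unitHomEquiv {X : E} (a r : Over X) (hr : rsf.loc r) :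
    ((rsf.Lf X).obj a ⟶ r) ≃ (a ⟶ r) :=
  Equiv.ofBijective (fun h => (rsf.η X).app a ≫ h)
    ((Function.bijective_iff_existsUnique _).2 (rsf.reflect X a r hr))

lemma lequiv_iff_comp_bijective {X : E} {a b : Over X} (β : a ⟶ b) :
    rsf.Lequiv β ↔ ∀ r, rsf.loc r → Function.Bijective (fun g : b ⟶ r => β ≫ g) := by
  have iso_iff : rsf.Lequiv β ↔ ∀ r, rsf.loc r →
      Function.Bijective (fun g : (rsf.Lf X).obj b ⟶ r => (rsf.Lf X).map β ≫ g) :=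
    ⟨fun _ r _ => (isIso_iff_coyoneda_map_bijective _).1 ‹_› r,
      isIso_of_coyoneda_map_bijective_of_mem _ _ (rsf.loc_obj X a) (rsf.loc_obj X b)⟩
  refine iso_iff.trans (forall₂_congr fun r hr => ?_)
  have conj : (fun g : b ⟶ r => β ≫ g) ∘ rsf.unitHomEquiv b r hr =
      rsf.unitHomEquiv a r hr ∘ (fun g => (rsf.Lf X).map β ≫ g) := by
    funext g
    simp [unitHomEquiv, ← (rsf.η X).naturality_assoc]
  rw [← Equiv.bijective_comp (rsf.unitHomEquiv b r hr), conj, Equiv.comp_bijective]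

lemma lequiv_hom_comp_comp_inv_iff {X : E} {a a' b b' : Over X} (e : a ≅ a') (β : a' ⟶ b')
    (e' : b ≅ b') : rsf.Lequiv (e.hom ≫ β ≫ e'.inv) ↔ rsf.Lequiv β := by
  simp only [Lequiv, Functor.map_comp, isIso_comp_left_iff, isIso_comp_right_iff]

lemma lequiv_pullback {X Y : E} (f : X ⟶ Y) {a b : Over Y} {β : a ⟶ b}
    (h : rsf.Lequiv β) : rsf.Lequiv ((Over.pullback f).map β) := by
  have : IsIso ((rsf.Lf Y).map β) := h
  have := rsf.comparison_isIso f a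
  have := rsf.comparison_isIso f b
  refine IsIso.of_isIso_fac_right (f := (rsf.Lf X).map ((Over.pullback f).map ((rsf.η Y).app b)))
    (h := (rsf.Lf X).map ((Over.pullback f).map ((rsf.η Y).app a)) ≫
      (rsf.Lf X).map ((Over.pullback f).map ((rsf.Lf Y).map β))) ?_
  simp only [← Functor.map_comp]
  congr 2
  exact (rsf.η Y).naturality β

lemma lequiv_map {X Y : E} (f : X ⟶ Y) {a b : Over X} {β : a ⟶ b}
    (h : rsf.Lequiv β) : rsf.Lequiv ((Over.map f).map β) := by
  rw [lequiv_iff_comp_bijective] at h ⊢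
  intro r hr
  let e := (Over.mapPullbackAdj f).homEquiv
  have conj : (fun g => (Over.map f).map β ≫ g) ∘ (e b r).symm =
      (e a r).symm ∘ (fun g => β ≫ g) := by
    funext g
    exact ((Over.mapPullbackAdj f).homEquiv_naturality_left_symm β g).symm
  rw [← Equiv.bijective_comp (e b r).symm, conj, Equiv.comp_bijective]
  exact h _ (rsf.loc_pullback f r hr)

lemma lequiv_whiskerRight {X : E} [CartesianMonoidalCategory (Over X)] {a b : Over X}
    {β : a ⟶ b} (h : rsf.Lequiv β) (s : Over X) : rsf.Lequiv (β ▷ s) := by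
  rw [Over.whiskerRight_eq_map_pullback, lequiv_hom_comp_comp_inv_iff]
  exact rsf.lequiv_map s.hom (rsf.lequiv_pullback s.hom h)

end ReflectiveSubfibration

/-- If `Over X` is cartesian closed, a morphism `α : p ⟶ q` of `Over X` is an
`L_X`-equivalence iff for every `r ∈ D_X` the induced map on exponentials
`r^α : r^q ⟶ r^p` is an isomorphism. -/
theorem lequiv_iff_exp_isIso (rsf : ReflectiveSubfibration E) (X : E)
    [CartesianMonoidalCategory (Over X)] [MonoidalClosed (Over X)]
    {p q : Over X} (α : p ⟶ q) :
    rsf.Lequiv α ↔ ∀ r : Over X, rsf.loc r → IsIso ((MonoidalClosed.pre α).app r) := by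
  constructor
  · intro h r hr
    exact (isIso_pre_app_iff α r).2 fun s =>
      (rsf.lequiv_iff_comp_bijective _).1 (rsf.lequiv_whiskerRight h s) r hr
  · intro h
    have h_unit : rsf.Lequiv (α ▷ 𝟙_ (Over X)) := (rsf.lequiv_iff_comp_bijective _).2
      fun r hr => (isIso_pre_app_iff α r).1 (h r hr) (𝟙_ _)
    rwa [whiskerRight_id, ReflectiveSubfibration.lequiv_hom_comp_comp_inv_iff] at h_unit
end

section
/- Let L be a reflective subfibration on E. Given composable morphisms f : X ⟶ Y and g : Y ⟶ Z in E with f L-connected, the morphism g is L-connected if and only if g ∘ f is L-connected. -/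
open CategoryTheory CategoryTheory.Limits

universe v u

variable (E : Type u) [Category.{v} E] [HasPullbacks E]

variable {E}

/-!
Since `L_Y f` is terminal, the map `f ⟶ 𝟙 Y` in `Over Y` is the unit of `f` up to isomorphism,
so maps from `f` to `L`-local objects over `Y` extend uniquely along it. Transposing along
`Σ_g ⊣ g*`, which is possible because `g*` preserves local objects, the map `f ≫ g ⟶ g` in
`Over Z` has the unique extension property against every local object over `Z`; hence it is
an `L_Z`-equivalence, and `L_Z (f ≫ g)` and `L_Z g` have isomorphic structure maps.
-/

theorem CategoryTheory.Adjunction.bijective_map_comp_iff {C D : Type*} [Category C] [Category D]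
    {F : C ⥤ D} {G : D ⥤ C} (adj : F ⊣ G) {A B : C} (a : A ⟶ B) (d : D) :
    Function.Bijective (fun v : F.obj B ⟶ d => F.map a ≫ v) ↔
      Function.Bijective (fun v : B ⟶ G.obj d => a ≫ v) := by
  have hconj : adj.homEquiv A d ∘ (fun v : F.obj B ⟶ d => F.map a ≫ v) =
      (fun v => a ≫ v) ∘ adj.homEquiv B d :=
    funext fun v => adj.homEquiv_naturality_left a v
  rw [← Equiv.comp_bijective _ (adj.homEquiv A d), hconj, Equiv.bijective_comp]

namespace ReflectiveSubfibration

variable (rsf : ReflectiveSubfibration E)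

lemma bijective_unit_comp {X : E} (p : Over X) {d : Over X} (hd : rsf.loc d) :
    Function.Bijective fun h : (rsf.Lf X).obj p ⟶ d => (rsf.η X).app p ≫ h :=
  (Function.bijective_iff_existsUnique _).mpr (rsf.reflect X p d hd)

lemma lequiv_of_bijective_comp {X : E} {p q : Over X} (α : p ⟶ q)
    (H : ∀ d : Over X, rsf.loc d → Function.Bijective fun v : q ⟶ d => α ≫ v) :
    rsf.Lequiv α := by
  have nat : (rsf.η X).app p ≫ (rsf.Lf X).map α = α ≫ (rsf.η X).app q :=
    ((rsf.η X).naturality α).symm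
  obtain ⟨β, hβ : α ≫ β = (rsf.η X).app p⟩ := (H _ (rsf.loc_obj X p)).2 ((rsf.η X).app p)
  obtain ⟨β', hβ' : (rsf.η X).app q ≫ β' = β⟩ :=
    (rsf.bijective_unit_comp q (rsf.loc_obj X p)).2 β
  have hβα : β ≫ (rsf.Lf X).map α = (rsf.η X).app q :=
    (H _ (rsf.loc_obj X q)).1 (by simp only [reassoc_of% hβ, nat])
  -- `β'` is the inverse of `L α`: both composites are detected by precomposing with a unit.
  refine ⟨β', (rsf.bijective_unit_comp p (rsf.loc_obj X p)).1 ?_,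
    (rsf.bijective_unit_comp q (rsf.loc_obj X q)).1 ?_⟩
  · simp only [reassoc_of% nat, hβ', hβ, Category.comp_id]
  · simp only [reassoc_of% hβ', hβα, Category.comp_id]

lemma connected_iff_of_lequiv {Z A B : E} {p : A ⟶ Z} {q : B ⟶ Z}
    (α : Over.mk p ⟶ Over.mk q) (hα : rsf.Lequiv α) :
    rsf.Connected p ↔ rsf.Connected q := by
  have : IsIso ((rsf.Lf Z).map α) := hα
  have : IsIso ((rsf.Lf Z).map α).left := inferInstanceAs (IsIso ((Over.forget Z).map _))
  rw [Connected, Connected, ← Over.w ((rsf.Lf Z).map α), isIso_comp_left_iff]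

lemma bijective_homMk_comp_of_connected {X Y : E} {f : X ⟶ Y} (hf : rsf.Connected f)
    {d : Over Y} (hd : rsf.loc d) :
    Function.Bijective fun s : Over.mk (𝟙 Y) ⟶ d =>
      (Over.homMk f : Over.mk f ⟶ Over.mk (𝟙 Y)) ≫ s := by
  let e : (rsf.Lf Y).obj (Over.mk f) ⟶ Over.mk (𝟙 Y) :=
    Over.homMk ((rsf.Lf Y).obj (Over.mk f)).hom
  have : IsIso ((Over.forget Y).map e) := hf
  have : IsIso e := isIso_of_reflects_iso e (Over.forget Y)
  have hfac : Over.homMk f = (rsf.η Y).app (Over.mk f) ≫ e := by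
    ext
    simp [e]
  have he : Function.Bijective fun s : Over.mk (𝟙 Y) ⟶ d => e ≫ s :=
    ⟨fun s t h => (cancel_epi e).1 h, fun t => ⟨inv e ≫ t, by simp⟩⟩
  simp only [hfac, Category.assoc]
  exact (rsf.bijective_unit_comp _ hd).comp he

end ReflectiveSubfibration

/-- If `f` is `L`-connected, then `g` is `L`-connected iff `g ∘ f` is `L`-connected. -/
theorem connected_comp_iff (rsf : ReflectiveSubfibration E) {X Y Z : E}
    (f : X ⟶ Y) (g : Y ⟶ Z) (hf : rsf.Connected f) :
    rsf.Connected g ↔ rsf.Connected (f ≫ g) := by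
  have hα : rsf.Lequiv ((Over.map g).map (Over.homMk f : Over.mk f ⟶ Over.mk (𝟙 Y))) :=
    rsf.lequiv_of_bijective_comp _ fun d hd =>
      ((Over.mapPullbackAdj g).bijective_map_comp_iff _ d).2
        (rsf.bijective_homMk_comp_of_connected hf (rsf.loc_pullback g d hd))
  simpa only [Category.id_comp] using
    (rsf.connected_iff_of_lequiv (p := f ≫ g) (q := 𝟙 Y ≫ g) _ hα).symm
end

section
/- Let L be a modality on E. For every object X of E and every object p : E' ⟶ X of Over X, write η : E' ⟶ M for the underlying morphism of E of the unit map η_X(p) : p ⟶ L_X(p), where M is the domain of L_X(p). Then η is an L-connected morphism of E. -/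
/-!
Write `η : E' ⟶ M` for the unit at `p` and `u : η ⟶ Q` for the unit of `L_M` at `η`. The map
`Q ⟶ M ⟶ X` is a composite of local maps, hence local over `X`, so `u` extends along `η` to a map
`h : M ⟶ Q` over `X`. Then `h ≫ (Q ⟶ M)` fixes the unit of `L_X p` and `(Q ⟶ M) ≫ h` fixes the unit
of `L_M η`, so by uniqueness in the universal property both are identities and `Q ≅ M` over `M`.
-/

open CategoryTheory CategoryTheory.Limits

universe v u

variable (E : Type u) [Category.{v} E] [HasPullbacks E]

variable {E}

namespace ReflectiveSubfibration

variable (rsf : ReflectiveSubfibration E)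

def IsModality : Prop :=
  ∀ {X Y Z : E} (f : X ⟶ Y) (g : Y ⟶ Z), rsf.LocalMap f → rsf.LocalMap g → rsf.LocalMap (f ≫ g)

variable {rsf}

theorem hom_ext_of_loc {X : E} {p d : Over X} (hd : rsf.loc d)
    {h h' : (rsf.Lf X).obj p ⟶ d} (e : (rsf.η X).app p ≫ h = (rsf.η X).app p ≫ h') : h = h' :=
  (rsf.reflect X p d hd _).unique e rfl

theorem left_eq_id_of_unit_comp {X : E} {p : Over X}
    {e : ((rsf.Lf X).obj p).left ⟶ ((rsf.Lf X).obj p).left}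
    (hw : e ≫ ((rsf.Lf X).obj p).hom = ((rsf.Lf X).obj p).hom)
    (hu : ((rsf.η X).app p).left ≫ e = ((rsf.η X).app p).left) : e = 𝟙 _ := by
  have : Over.homMk e hw = 𝟙 ((rsf.Lf X).obj p) :=
    hom_ext_of_loc (rsf.loc_obj X p) (by ext; simpa using hu)
  exact congrArg CommaMorphism.left this

theorem IsModality.exists_unit_extension (hmod : rsf.IsModality) {X : E} {p : Over X}
    {q : Over ((rsf.Lf X).obj p).left} (hq : rsf.loc q)
    (g : p.left ⟶ q.left) (hg : g ≫ q.hom = ((rsf.η X).app p).left) :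
    ∃ h : ((rsf.Lf X).obj p).left ⟶ q.left,
      ((rsf.η X).app p).left ≫ h = g ∧
        h ≫ q.hom ≫ ((rsf.Lf X).obj p).hom = ((rsf.Lf X).obj p).hom := by
  have hloc : rsf.loc (Over.mk (q.hom ≫ ((rsf.Lf X).obj p).hom)) :=
    hmod q.hom _ hq (rsf.loc_obj X p)
  have hgw : g ≫ q.hom ≫ ((rsf.Lf X).obj p).hom = p.hom := by
    rw [← Category.assoc, hg]
    exact Over.w _
  obtain ⟨h, hηh, -⟩ := rsf.reflect X p _ hloc (Over.homMk g hgw)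
  exact ⟨h.left, congrArg CommaMorphism.left hηh, Over.w h⟩

end ReflectiveSubfibration

open ReflectiveSubfibration in
/-- For a modality, the underlying morphism of every unit map `η_X p : p ⟶ L_X p`
is `L`-connected. -/
theorem unit_connected (rsf : ReflectiveSubfibration E)
    (hmod : ∀ {X Y Z : E} (f : X ⟶ Y) (g : Y ⟶ Z),
      rsf.LocalMap f → rsf.LocalMap g → rsf.LocalMap (f ≫ g))
    {E' X : E} (p : E' ⟶ X) :
    rsf.Connected ((rsf.η X).app (Over.mk p)).left := by
  set η := (rsf.η X).app (Over.mk p)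
  set Q := (rsf.Lf ((rsf.Lf X).obj (Over.mk p)).left).obj (Over.mk η.left)
  set u := (rsf.η _).app (Over.mk η.left)
  obtain ⟨h, hηh, hw⟩ :=
    IsModality.exists_unit_extension (p := Over.mk p) hmod (rsf.loc_obj _ _) u.left (Over.w u)
  have hsection : h ≫ Q.hom = 𝟙 _ :=
    left_eq_id_of_unit_comp (by rwa [Category.assoc]) (by rw [← Category.assoc, hηh]; exact Over.w u)
  have hretraction : Q.hom ≫ h = 𝟙 _ :=
    left_eq_id_of_unit_comp (p := Over.mk η.left) (by rw [Category.assoc, hsection, Category.comp_id])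
      (by rw [← Category.assoc, Over.w u]; exact hηh)
  exact ⟨h, hretraction, hsection⟩
end

section
/- Let L be a modality on E. If f : A ⟶ B is a morphism of E that is uniquely left orthogonal to every L-local morphism of E, then f is L-connected. -/
open CategoryTheory CategoryTheory.Limits

universe v u

variable (E : Type u) [Category.{v} E] [HasPullbacks E]

variable {E}

/- Let `η : f ⟶ L_B f` be the unit, `L_B f` lying over `B` via a local map `ℓ`. Lifting in the
square `η ≫ ℓ = f ≫ 𝟙` gives a section `d` of `ℓ` with `f ≫ d = η`. Then `ℓ ≫ d` is an
endomorphism of the reflection `L_B f` fixing the unit, hence the identity by the universal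
property, so `ℓ` is an isomorphism. -/

namespace ReflectiveSubfibration

variable (rsf : ReflectiveSubfibration E)

theorem localMap_Lf_obj_hom {X : E} (p : Over X) : rsf.LocalMap ((rsf.Lf X).obj p).hom :=
  rsf.loc_obj X p

theorem Lf_endo_eq_id_of_unit_comp {X : E} {p : Over X}
    (e : (rsf.Lf X).obj p ⟶ (rsf.Lf X).obj p) (he : (rsf.η X).app p ≫ e = (rsf.η X).app p) :
    e = 𝟙 _ := by
  obtain ⟨_, -, huniq⟩ := rsf.reflect X p _ (rsf.loc_obj X p) ((rsf.η X).app p)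
  exact (huniq e he).trans (huniq (𝟙 _) (Category.comp_id _)).symm

theorem isIso_Lf_obj_hom_of_section {X : E} {p : Over X} (d : X ⟶ ((rsf.Lf X).obj p).left)
    (hd : p.hom ≫ d = ((rsf.η X).app p).left) (hsection : d ≫ ((rsf.Lf X).obj p).hom = 𝟙 X) :
    IsIso ((rsf.Lf X).obj p).hom := by
  let e : (rsf.Lf X).obj p ⟶ (rsf.Lf X).obj p :=
    Over.homMk (((rsf.Lf X).obj p).hom ≫ d) (by rw [Category.assoc, hsection, Category.comp_id])
  have he : (rsf.η X).app p ≫ e = (rsf.η X).app p := by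
    ext
    simp only [Over.comp_left, Over.homMk_left, e, ← Category.assoc, Over.w, Functor.id_obj, hd]
  have hretract : ((rsf.Lf X).obj p).hom ≫ d = 𝟙 _ :=
    congrArg CommaMorphism.left (rsf.Lf_endo_eq_id_of_unit_comp e he)
  exact ⟨d, hretract, hsection⟩

end ReflectiveSubfibration

theorem connected_of_orth_general (rsf : ReflectiveSubfibration E)
    {A B : E} (f : A ⟶ B)
    (h : ∀ {X Y : E} (r : X ⟶ Y), rsf.LocalMap r → UniqueLift f r) :
    rsf.Connected f := by
  set L := (rsf.Lf B).obj (Over.mk f)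
  have hsquare : ((rsf.η B).app (Over.mk f)).left ≫ L.hom = f ≫ 𝟙 B := by
    rw [Category.comp_id]
    exact Over.w ((rsf.η B).app (Over.mk f))
  obtain ⟨d, ⟨hd, hsection⟩, -⟩ :=
    h L.hom (rsf.localMap_Lf_obj_hom _) ((rsf.η B).app (Over.mk f)).left (𝟙 B) hsquare
  exact rsf.isIso_Lf_obj_hom_of_section d hd hsection

/-- For a modality, a morphism which is uniquely left orthogonal to every `L`-local
morphism is `L`-connected. -/
theorem connected_of_orth (rsf : ReflectiveSubfibration E)
    (hmod : ∀ {X Y Z : E} (f : X ⟶ Y) (g : Y ⟶ Z),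
      rsf.LocalMap f → rsf.LocalMap g → rsf.LocalMap (f ≫ g))
    {A B : E} (f : A ⟶ B)
    (h : ∀ {X Y : E} (r : X ⟶ Y), rsf.LocalMap r → UniqueLift f r) :
    rsf.Connected f :=
  connected_of_orth_general rsf f h
end

section
/- Let E be a category with finite limits, let i : D ⥤ E be a fully faithful functor admitting a left adjoint a : E ⥤ D (so D is a reflective subcategory of E), and suppose the reflector a preserves finite limits. Write L = i ∘ a and η : 𝟭_E ⟶ L for the unit of the adjunction. Then the pair (𝐋, 𝐑), where 𝐋 is the class of morphisms f of E such that L(f) is an isomorphism, and 𝐑 is the class of morphisms f : X ⟶ Y such that the unit naturality square with sides η_X : X ⟶ L X, η_Y : Y ⟶ L Y, f, and L(f) is a pullback square, is a stable orthogonal factorization system on E. -/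
open CategoryTheory CategoryTheory.Limits

universe v u

variable (E : Type u) [Category.{v} E] [HasPullbacks E]

variable {E}

/-- A stable orthogonal factorization system `(Lc, Rc)` on a category: both classes
contain all isomorphisms and are closed under composition, every morphism factors as
a morphism in `Lc` followed by one in `Rc`, every morphism in `Lc` is uniquely left
orthogonal to every morphism in `Rc`, and `Lc` is stable under pullback along
arbitrary morphisms. -/
structure IsStableOFS {C : Type*} [Category C] (Lc Rc : MorphismProperty C) : Prop where
  left_iso : ∀ {A B : C} (f : A ⟶ B), IsIso f → Lc f
  right_iso : ∀ {A B : C} (f : A ⟶ B), IsIso f → Rc f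
  left_comp : ∀ {A B D : C} (f : A ⟶ B) (g : B ⟶ D), Lc f → Lc g → Lc (f ≫ g)
  right_comp : ∀ {A B D : C} (f : A ⟶ B) (g : B ⟶ D), Rc f → Rc g → Rc (f ≫ g)
  factor : ∀ {A B : C} (f : A ⟶ B), ∃ (D : C) (l : A ⟶ D) (r : D ⟶ B), Lc l ∧ Rc r ∧ l ≫ r = f
  orth : ∀ {A B X Y : C} (l : A ⟶ B) (r : X ⟶ Y), Lc l → Rc r → UniqueLift l r
  left_stable : ∀ {P A B D : C} (fst : P ⟶ A) (snd : P ⟶ B) (f : A ⟶ D) (g : B ⟶ D),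
      IsPullback fst snd f g → Lc g → Lc fst

universe v₂ u₂

/-!
An `𝐋`-map `l : A ⟶ B` is orthogonal to every map between `L`-local objects, since maps from `B`
into a local object correspond to maps out of `L B` and `L l` is invertible; an `𝐑`-map is a
pullback of such a map along a unit, and orthogonality is stable under pullback. A map
`f : A ⟶ B` factors through `Z = L A ×_{L B} B`; left exactness of `L` makes `A ⟶ Z` an
`𝐋`-map and `Z ⟶ B` an `𝐑`-map, and gives pullback stability of `𝐋`.
-/

namespace UniqueLift

variable {C : Type*} [Category C]

lemma of_bijective_comp {A B X Y : C} {l : A ⟶ B} (g : X ⟶ Y)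
    (hX : Function.Bijective fun d : B ⟶ X => l ≫ d)
    (hY : Function.Injective fun d : B ⟶ Y => l ≫ d) : UniqueLift l g := by
  intro u v huv
  obtain ⟨d, hd⟩ := hX.2 u
  refine ⟨d, ⟨hd, hY ?_⟩, fun d' ⟨hd', _⟩ => hX.1 (hd'.trans hd.symm)⟩
  simp only [← Category.assoc, hd, huv]

lemma of_isPullback {A B P X Y Z : C} {l : A ⟶ B} {fst : X ⟶ P} {r : X ⟶ Y} {g : P ⟶ Z}
    {q : Y ⟶ Z} (hg : UniqueLift l g) (h : IsPullback fst r g q) : UniqueLift l r := by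
  intro u v huv
  obtain ⟨e, ⟨hle, heg⟩, he⟩ := hg (u ≫ fst) (v ≫ q) (by simp [h.w, reassoc_of% huv])
  refine ⟨h.lift e v (by simp [heg]),
    ⟨h.hom_ext (by simp [hle]) (by simp [huv]), by simp⟩, ?_⟩
  rintro d ⟨hld, hdr⟩
  refine h.hom_ext ?_ (by simp [hdr])
  rw [h.lift_fst]
  exact he _ ⟨by simp [reassoc_of% hld], by simp [h.w, reassoc_of% hdr]⟩

end UniqueLift

namespace CategoryTheory.Adjunction

variable {C : Type*} [Category C] {D : Type*} [Category D] {i : D ⥤ C} {a : C ⥤ D}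
  (adj : a ⊣ i)

lemma bijective_comp_of_isIso_map {A B P : C} {l : A ⟶ B} (hl : IsIso (i.map (a.map l)))
    [IsIso (adj.unit.app P)] : Function.Bijective fun d : B ⟶ P => l ≫ d := by
  refine Function.bijective_iff_has_inverse.2
    ⟨fun w => adj.unit.app B ≫ inv (i.map (a.map l)) ≫ i.map (a.map w) ≫ inv (adj.unit.app P),
      fun d => ?_, fun w => ?_⟩
  · simp
  · simp [← adj.unit_naturality_assoc]

lemma uniqueLift_of_isIso_map [i.Full] [i.Faithful] {A B X Y : C} {l : A ⟶ B} {r : X ⟶ Y}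
    (hl : IsIso (i.map (a.map l)))
    (hr : IsPullback (adj.unit.app X) r (i.map (a.map r)) (adj.unit.app Y)) : UniqueLift l r :=
  (UniqueLift.of_bijective_comp (i.map (a.map r)) (adj.bijective_comp_of_isIso_map hl)
    (adj.bijective_comp_of_isIso_map hl).1).of_isPullback hr

variable [i.Full] [i.Faithful] [PreservesLimitsOfShape WalkingCospan a]

lemma isPullback_unit_of_isPullback {P X Y : C} {fst : X ⟶ P} {r : X ⟶ Y}
    {g : P ⟶ i.obj (a.obj Y)} (h : IsPullback fst r g (adj.unit.app Y)) [IsIso (adj.unit.app P)] :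
    IsPullback (adj.unit.app X) r (i.map (a.map r)) (adj.unit.app Y) := by
  have hunit : IsPullback (adj.unit.app P) g (i.map (a.map g)) (adj.unit.app (i.obj (a.obj Y))) :=
    .of_horiz_isIso ⟨adj.unit_naturality g⟩
  -- Pasting `h` with the unit square at `g` gives the unit square at `r` pasted with `L h`.
  have hpaste := h.paste_horiz hunit
  have hcomp : adj.unit.app Y ≫ adj.unit.app (i.obj (a.obj Y)) =
      adj.unit.app Y ≫ i.map (a.map (adj.unit.app Y)) :=
    (adj.unit_naturality _).symm
  rw [← adj.unit_naturality fst, hcomp] at hpaste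
  have := adj.isRightAdjoint
  exact hpaste.of_right (adj.unit_naturality r) ((h.map a).map i)

lemma isIso_map_pullback_lift [HasPullbacks C] {A B : C} (f : A ⟶ B) :
    IsIso (i.map (a.map (pullback.lift (adj.unit.app A) f (adj.unit_naturality f)))) := by
  have := adj.isRightAdjoint
  let fst := pullback.fst (i.map (a.map f)) (adj.unit.app B)
  have : IsIso (i.map (a.map fst)) :=
    (((IsPullback.of_hasPullback _ _).map a).map i).isIso_fst_of_isIso
  have hfac : i.map (a.map (pullback.lift _ _ (adj.unit_naturality f))) ≫ i.map (a.map fst) =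
      i.map (a.map (adj.unit.app A)) := by
    simp only [← Functor.map_comp, fst, pullback.lift_fst]
  exact IsIso.of_isIso_fac_right hfac

end CategoryTheory.Adjunction

/-- For a left exact reflective localization `L = i ∘ a` of a finitely complete
category, the `L`-equivalences and the morphisms whose unit naturality square is a
pullback form a stable orthogonal factorization system. -/
theorem stableOFS_of_leftExactLocalization {C : Type u} [Category.{v} C] [HasFiniteLimits C]
    {D : Type u₂} [Category.{v₂} D]
    (i : D ⥤ C) [i.Full] [i.Faithful]
    (a : C ⥤ D) (adj : a ⊣ i) [PreservesFiniteLimits a] :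
    IsStableOFS
      (fun _ _ f => IsIso ((a ⋙ i).map f))
      (fun X Y f => IsPullback (adj.unit.app X) f ((a ⋙ i).map f) (adj.unit.app Y)) := by
  have := adj.isRightAdjoint
  exact
    { left_iso := fun _ _ => inferInstance
      right_iso := fun f _ => .of_vert_isIso ⟨adj.unit_naturality f⟩
      left_comp := fun f g hf hg => by rw [Functor.map_comp]; exact IsIso.comp_isIso' hf hg
      right_comp := fun f g hf hg => by rw [Functor.map_comp]; exact hf.paste_vert hg
      factor := fun f => ⟨_, _, _, adj.isIso_map_pullback_lift f,
        adj.isPullback_unit_of_isPullback (.of_hasPullback (i.map (a.map f)) _),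
        pullback.lift_snd _ _ _⟩
      orth := fun _ _ hl hr => adj.uniqueLift_of_isIso_map hl hr
      left_stable := fun _ _ _ _ h hg => ((h.map a).map i).isIso_fst_of_isIso hg }
end
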